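/- On the projective line over Z_4 × Z_4, the neighbourhoods of the two distant points U = (1,0) and V = (0,1) intersect in exactly 8 points, namely precisely the type II points. -/

import Mathlib

def Admissible {R : Type*} [CommRing R] (p : R × R) : Prop :=
  ∃ M : Matrix (Fin 2) (Fin 2) R, IsUnit M ∧ M 0 0 = p.1 ∧ M 0 1 = p.2

def PairRel {R : Type*} [CommRing R] (p q : {p : R × R // Admissible p}) : Prop :=
  ∃ u : Rˣ, q.1 = ((u : R) * p.1.1, (u : R) * p.1.2)

/-- The projective line over `R`: unit-orbit classes of admissible pairs. -/
def PL (R : Type*) [CommRing R] : Type _ := Quot (@PairRel R _)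

def PL.mk {R : Type*} [CommRing R] (p : R × R) (h : Admissible p) : PL R :=
  Quot.mk _ ⟨p, h⟩

/-- `x` is a zero-divisor (counting `0` as a zero-divisor). -/
def IsZD {R : Type*} [CommRing R] (x : R) : Prop :=
  x = 0 ∨ ∃ y : R, y ≠ 0 ∧ x * y = 0

/-- A point is of type I if some representative has a unit entry. -/
def TypeI {R : Type*} [CommRing R] (X : PL R) : Prop :=
  ∃ p h, PL.mk p h = X ∧ (IsUnit p.1 ∨ IsUnit p.2)

/-- A point is of type II if every representative has both coordinates zero-divisors. -/
def TypeII {R : Type*} [CommRing R] (X : PL R) : Prop :=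
  ∀ p h, PL.mk p h = X → IsZD p.1 ∧ IsZD p.2

/-- Neighbour relation: the determinant of representatives is a non-unit. -/
def Nbr {R : Type*} [CommRing R] (X Y : PL R) : Prop :=
  ∃ p q hp hq, X = PL.mk p hp ∧ Y = PL.mk q hq ∧ ¬ IsUnit (p.1 * q.2 - p.2 * q.1)

/-- Neighbour relation phrased via zero-divisors. -/
def NbrZD {R : Type*} [CommRing R] (X Y : PL R) : Prop :=
  ∃ p q hp hq, X = PL.mk p hp ∧ Y = PL.mk q hq ∧ IsZD (p.1 * q.2 - p.2 * q.1)

/-- Distant relation: the determinant of representatives is a unit. -/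
def Distant {R : Type*} [CommRing R] (X Y : PL R) : Prop :=
  ∃ p q hp hq, X = PL.mk p hp ∧ Y = PL.mk q hq ∧ IsUnit (p.1 * q.2 - p.2 * q.1)

lemma adm {R : Type*} [CommRing R] (a b c d : R) (h : IsUnit (a * d - b * c)) :
    Admissible (a, b) :=
  ⟨!![a, b; c, d], (Matrix.isUnit_iff_isUnit_det _).2
    (by simpa [Matrix.det_fin_two_of] using h), rfl, rfl⟩

def ptU (R : Type*) [CommRing R] : PL R :=
  PL.mk (1, 0) (adm 1 0 0 1 (by simpa using isUnit_one))

def ptV (R : Type*) [CommRing R] : PL R :=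
  PL.mk (0, 1) (adm 0 1 1 0 (by simpa using (isUnit_one (M := R)).neg))

def ptW (R : Type*) [CommRing R] : PL R :=
  PL.mk (1, 1) (adm 1 1 0 1 (by simpa using isUnit_one))

abbrev R4 : Type := ZMod 4 × ZMod 4

/-! A point `[(a, b)]` of the projective line over any nontrivial commutative ring is a neighbour
of `U = [(1, 0)]` iff `b` is a zero-divisor, and of `V = [(0, 1)]` iff `a` is; and a zero-divisor
coordinate rules out being `U` or `V`, whose representatives have a unit there. So the common
neighbours of `U` and `V` other than themselves are exactly the type II points.

To count them over `ℤ₄ × ℤ₄`: as `ℤ₄` is local, each component of an admissible pair has a unit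
entry, and a finite search shows that up to a unit every such pair with both coordinates
non-units is one of eight normal forms, no two of which are unit multiples of each other. -/

section ProjectiveLine

variable {R : Type*} [CommRing R]

theorem pairRel_equivalence : Equivalence (@PairRel R _) where
  refl _ := ⟨1, by simp⟩
  symm {p q} := by
    rintro ⟨u, hu⟩
    exact ⟨u⁻¹, by rw [hu]; simp⟩
  trans {p q r} := by
    rintro ⟨u, hu⟩ ⟨v, hv⟩
    exact ⟨v * u, by rw [hv, hu]; simp [mul_assoc]⟩

theorem PL.mk_eq_mk_iff {p q : R × R} {hp : Admissible p} {hq : Admissible q} :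
    PL.mk p hp = PL.mk q hq ↔ ∃ u : Rˣ, q = ((u : R) * p.1, (u : R) * p.2) :=
  Quot.eq.trans pairRel_equivalence.eqvGen_iff

theorem admissible_iff {p : R × R} : Admissible p ↔ ∃ c d : R, IsUnit (p.1 * d - p.2 * c) := by
  constructor
  · rintro ⟨M, hM, h1, h2⟩
    refine ⟨M 1 0, M 1 1, ?_⟩
    rwa [Matrix.isUnit_iff_isUnit_det, Matrix.det_fin_two, h1, h2] at hM
  · rintro ⟨c, d, h⟩
    exact adm p.1 p.2 c d h

theorem Admissible.map {S : Type*} [CommRing S] (f : R →+* S) {p : R × R} (h : Admissible p) :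
    Admissible (f p.1, f p.2) := by
  obtain ⟨c, d, hu⟩ := admissible_iff.1 h
  refine admissible_iff.2 ⟨f c, f d, ?_⟩
  simpa only [map_sub, map_mul] using hu.map f

theorem Admissible.isUnit_or_isUnit [IsLocalRing R] {p : R × R} (h : Admissible p) :
    IsUnit p.1 ∨ IsUnit p.2 := by
  obtain ⟨c, d, hu⟩ := admissible_iff.1 h
  rw [sub_eq_add_neg] at hu
  rcases IsLocalRing.isUnit_or_isUnit_of_isUnit_add hu with h | h
  · exact .inl (isUnit_of_mul_isUnit_left h)
  · exact .inr (isUnit_of_mul_isUnit_left ((IsUnit.neg_iff _).1 h))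

theorem isZD_units_mul_iff (u : Rˣ) {x : R} : IsZD ((u : R) * x) ↔ IsZD x := by
  unfold IsZD
  simp only [Units.mul_right_eq_zero, mul_assoc]

theorem isZD_neg_iff {x : R} : IsZD (-x) ↔ IsZD x := by
  simpa using isZD_units_mul_iff (-1 : Rˣ) (x := x)

theorem IsZD.not_isUnit [Nontrivial R] {x : R} (h : IsZD x) : ¬IsUnit x := by
  intro hu
  rcases h with rfl | ⟨y, hy, hxy⟩
  · exact not_isUnit_zero hu
  · exact hy (hu.mul_right_eq_zero.1 hxy)

theorem isZD_iff_not_isUnit [Nontrivial R] [Finite R] {x : R} : IsZD x ↔ ¬IsUnit x := by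
  refine ⟨IsZD.not_isUnit, fun hx => .inr ?_⟩
  rw [isUnit_iff_mem_nonZeroDivisors_of_finite, mem_nonZeroDivisors_iff_right] at hx
  push Not at hx
  obtain ⟨y, hxy, hy⟩ := hx
  exact ⟨y, hy, by rwa [mul_comm]⟩

theorem nbrZD_mk_mk_iff {p q : R × R} {hp : Admissible p} {hq : Admissible q} :
    NbrZD (PL.mk p hp) (PL.mk q hq) ↔ IsZD (p.1 * q.2 - p.2 * q.1) := by
  refine ⟨?_, fun h => ⟨p, q, hp, hq, rfl, rfl, h⟩⟩
  rintro ⟨p', q', hp', hq', hpp', hqq', h⟩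
  obtain ⟨u, rfl⟩ := PL.mk_eq_mk_iff.1 hpp'
  obtain ⟨v, rfl⟩ := PL.mk_eq_mk_iff.1 hqq'
  have hdet : (u : R) * p.1 * ((v : R) * q.2) - (u : R) * p.2 * ((v : R) * q.1) =
      ((u * v : Rˣ) : R) * (p.1 * q.2 - p.2 * q.1) := by
    push_cast; ring
  exact (isZD_units_mul_iff (u * v)).1 (hdet ▸ h)

theorem typeII_mk_iff {p : R × R} {hp : Admissible p} :
    TypeII (PL.mk p hp) ↔ IsZD p.1 ∧ IsZD p.2 := by
  refine ⟨fun h => h p hp rfl, ?_⟩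
  rintro ⟨h1, h2⟩ q hq hpq
  obtain ⟨u, rfl⟩ := PL.mk_eq_mk_iff.1 hpq
  exact ⟨(isZD_units_mul_iff u).1 h1, (isZD_units_mul_iff u).1 h2⟩

theorem nbrZD_ptU_iff {p : R × R} {hp : Admissible p} :
    NbrZD (PL.mk p hp) (ptU R) ↔ IsZD p.2 := by
  rw [ptU, nbrZD_mk_mk_iff, mul_zero, mul_one, zero_sub, isZD_neg_iff]

theorem nbrZD_ptV_iff {p : R × R} {hp : Admissible p} :
    NbrZD (PL.mk p hp) (ptV R) ↔ IsZD p.1 := by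
  rw [ptV, nbrZD_mk_mk_iff, mul_zero, mul_one, sub_zero]

theorem mk_ne_ptU [Nontrivial R] {p : R × R} {hp : Admissible p} (h : IsZD p.1) :
    PL.mk p hp ≠ ptU R := by
  intro hU
  obtain ⟨u, hu⟩ := PL.mk_eq_mk_iff.1 hU
  exact h.not_isUnit (IsUnit.of_mul_eq_one_right _ (congrArg Prod.fst hu).symm)

theorem mk_ne_ptV [Nontrivial R] {p : R × R} {hp : Admissible p} (h : IsZD p.2) :
    PL.mk p hp ≠ ptV R := by
  intro hV
  obtain ⟨u, hu⟩ := PL.mk_eq_mk_iff.1 hV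
  exact h.not_isUnit (IsUnit.of_mul_eq_one_right _ (congrArg Prod.snd hu).symm)

theorem nbrZD_ptU_ptV_iff_typeII [Nontrivial R] (X : PL R) :
    (NbrZD X (ptU R) ∧ X ≠ ptU R ∧ NbrZD X (ptV R) ∧ X ≠ ptV R) ↔ TypeII X := by
  obtain ⟨⟨p, hp⟩⟩ := X
  change (NbrZD (PL.mk p hp) _ ∧ PL.mk p hp ≠ _ ∧ NbrZD (PL.mk p hp) _ ∧ PL.mk p hp ≠ _) ↔
    TypeII (PL.mk p hp)
  rw [nbrZD_ptU_iff, nbrZD_ptV_iff, typeII_mk_iff]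
  exact ⟨fun ⟨h2, _, h1, _⟩ => ⟨h1, h2⟩, fun ⟨h1, h2⟩ => ⟨h2, mk_ne_ptU h1, h1, mk_ne_ptV h2⟩⟩

end ProjectiveLine

instance : Nontrivial (ZMod 4) := ⟨⟨0, 1, by decide⟩⟩

instance : IsLocalRing (ZMod 4) := .of_isUnit_or_isUnit_one_sub_self (by decide)

def typeIIReps : Finset (R4 × R4) :=
  {((1, 0), (0, 1)), ((1, 0), (2, 1)), ((1, 2), (0, 1)), ((1, 2), (2, 1)),
   ((0, 1), (1, 0)), ((0, 1), (1, 2)), ((2, 1), (1, 0)), ((2, 1), (1, 2))}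

set_option maxRecDepth 10000 in
theorem admissible_of_mem_typeIIReps {t : R4 × R4} (ht : t ∈ typeIIReps) : Admissible t :=
  admissible_iff.2 ⟨t.2, t.1, by revert t; decide⟩

set_option maxRecDepth 10000 in
theorem not_isUnit_of_mem_typeIIReps :
    ∀ t ∈ typeIIReps, ¬IsUnit t.1 ∧ ¬IsUnit t.2 := by
  decide

set_option maxRecDepth 10000 in
theorem eq_of_mem_typeIIReps_of_units_mul :
    ∀ t ∈ typeIIReps, ∀ t' ∈ typeIIReps, ∀ u : R4, IsUnit u → t' = (u * t.1, u * t.2) → t = t' := by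
  decide

set_option synthInstance.maxSize 400 in
set_option maxRecDepth 40000 in
theorem exists_units_mul_mem_typeIIReps : ∀ p : R4 × R4,
    (IsUnit p.1.1 ∨ IsUnit p.2.1) → (IsUnit p.1.2 ∨ IsUnit p.2.2) → ¬IsUnit p.1 → ¬IsUnit p.2 →
      ∃ u : R4, IsUnit u ∧ (u * p.1, u * p.2) ∈ typeIIReps := by
  decide

theorem exists_mem_typeIIReps_mk_eq : ∀ X : PL R4, TypeII X →
    ∃ t, ∃ ht : t ∈ typeIIReps, PL.mk t (admissible_of_mem_typeIIReps ht) = X := by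
  rintro ⟨p, hp⟩ hX
  obtain ⟨h1, h2⟩ := typeII_mk_iff.1 hX
  obtain ⟨u, hu, ht⟩ := exists_units_mul_mem_typeIIReps p
    (hp.map (RingHom.fst _ _)).isUnit_or_isUnit (hp.map (RingHom.snd _ _)).isUnit_or_isUnit
    h1.not_isUnit h2.not_isUnit
  exact ⟨_, ht, (PL.mk_eq_mk_iff.2 ⟨hu.unit, rfl⟩).symm⟩

theorem card_typeII_R4 : Nat.card {X : PL R4 // TypeII X} = 8 := by
  let f : typeIIReps → {X : PL R4 // TypeII X} := fun t =>
    ⟨PL.mk t.1 (admissible_of_mem_typeIIReps t.2), typeII_mk_iff.2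
      ((not_isUnit_of_mem_typeIIReps t.1 t.2).imp isZD_iff_not_isUnit.2 isZD_iff_not_isUnit.2)⟩
  have hf : f.Bijective := by
    refine ⟨?_, ?_⟩
    · rintro ⟨t, ht⟩ ⟨t', ht'⟩ htt'
      obtain ⟨u, hu⟩ := PL.mk_eq_mk_iff.1 (congrArg Subtype.val htt')
      exact Subtype.ext (eq_of_mem_typeIIReps_of_units_mul t ht t' ht' u u.isUnit hu)
    · rintro ⟨X, hX⟩
      obtain ⟨t, ht, rfl⟩ := exists_mem_typeIIReps_mk_eq X hX
      exact ⟨⟨t, ht⟩, rfl⟩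
  rw [← Nat.card_eq_of_bijective f hf, Nat.card_eq_fintype_card, Fintype.card_coe]
  rfl

theorem stmt9 :
    (∀ X : PL R4,
      (NbrZD X (ptU R4) ∧ X ≠ ptU R4 ∧ NbrZD X (ptV R4) ∧ X ≠ ptV R4) ↔ TypeII X) ∧
    Nat.card {X : PL R4 //
      NbrZD X (ptU R4) ∧ X ≠ ptU R4 ∧ NbrZD X (ptV R4) ∧ X ≠ ptV R4} = 8 :=
  ⟨nbrZD_ptU_ptV_iff_typeII,
    (Nat.card_congr (Equiv.subtypeEquivRight nbrZD_ptU_ptV_iff_typeII)).trans card_typeII_R4⟩
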